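/- Let n ≥ 2, let β ∈ SB_n be a simple braid with x_{n−1} | β, and let m ≥ 1. Then for every γ ∈ C_{n+m}(β), the generator x_n does not divide γ. -/

import Mathlib

/-- The defining relations of the positive braid monoid `MB_∞` on generators
`x i`, `i : ℕ+`: the braid relations and the far-commutation relations. -/
def BraidRel : FreeMonoid ℕ+ → FreeMonoid ℕ+ → Prop := fun a b =>
  (∃ i : ℕ+, a = FreeMonoid.of (i + 1) * FreeMonoid.of i * FreeMonoid.of (i + 1) ∧
      b = FreeMonoid.of i * FreeMonoid.of (i + 1) * FreeMonoid.of i) ∨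
  (∃ i j : ℕ+, i + 2 ≤ j ∧ a = FreeMonoid.of i * FreeMonoid.of j ∧
      b = FreeMonoid.of j * FreeMonoid.of i)

/-- The congruence generated by the braid relations. -/
def braidCon : Con (FreeMonoid ℕ+) := conGen BraidRel

/-- The positive braid monoid `MB_∞`. -/
abbrev MB : Type := braidCon.Quotient

/-- The generator `x_i` of `MB_∞`, for `i : ℕ+`. -/
def braidGen (i : ℕ+) : MB := braidCon.mk' (FreeMonoid.of i)

/-- The generator `x_i` of `MB_∞`, indexed by a natural number `i ≥ 1`
(junk value `x_1` for `i = 0`). -/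
def X (i : ℕ) : MB := braidGen ⟨max i 1, lt_of_lt_of_le one_pos (le_max_right i 1)⟩

/-- `x_i` divides `β`: `β = δ * x_i * ε` for some `δ ε ∈ MB_∞`. -/
def GenDvd (i : ℕ) (β : MB) : Prop := ∃ δ ε : MB, β = δ * X i * ε

/-- `x_i` left-divides `β`: `β = x_i * ε` for some `ε ∈ MB_∞`. -/
def GenDvdL (i : ℕ) (β : MB) : Prop := ∃ ε : MB, β = X i * ε

/-- `x_i` right-divides `β`: `β = δ * x_i` for some `δ ∈ MB_∞`. -/
def GenDvdR (i : ℕ) (β : MB) : Prop := ∃ δ : MB, β = δ * X i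

/-- The set `SB_n` of simple braids in `MB_n`: products of words in the
generators `x_1, …, x_{n-1}` in which each generator appears at most once. -/
def SB (n : ℕ) : Set MB :=
  {β | ∃ w : List ℕ, w.Nodup ∧ (∀ i ∈ w, 1 ≤ i ∧ i < n) ∧ β = (w.map X).prod}

/-- The simple centralizer `C_n(β)` of `β` in `SB_n`. -/
def C (n : ℕ) (β : MB) : Set MB := {γ ∈ SB n | β * γ = γ * β}

/-- `c_n(β)`, the cardinality of the simple centralizer `C_n(β)`. -/
noncomputable def c (n : ℕ) (β : MB) : ℕ := (C n β).ncard

/-!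
Send `x_i` to the adjacent transposition `(i i+1)` of `ℕ`. If a word uses each letter at most
once, multiplying in its letters one at a time always merges two distinct cycles (a letter `j`
is absent from the rest of the word, which therefore preserves `{x | x ≤ j}`), so in the image of
a simple braid `i` and `i + 1` lie in one cycle for every letter `i`. Divisibility by `x_i` forces
the letter `i` into every word for the braid, so the image `τ` of `γ` joins `n` to `n + 1` and the
image `σ` of `β` joins `n - 1` to `n`. Since `σ` commutes with `τ` and fixes `n + 1`, it fixes
the whole `τ`-cycle of `n + 1`, in particular `n`; but `n` lies on a `σ`-cycle with
`n - 1 ≠ n`.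
-/

open Equiv Function

namespace Equiv.Perm

variable {α : Type*} {π : Perm α}

theorem SameCycle.iff_of_forall_apply_iff {p : α → Prop} (hp : ∀ x, p (π x) ↔ p x)
    {a b : α} (h : π.SameCycle a b) : p a ↔ p b := by
  obtain ⟨k, rfl⟩ := h
  have hpow : ∀ {c : α}, p c → p ((π ^ k) c) := fun {c} hc => by
    simpa using ((π.subtypePerm hp ^ k) ⟨c, hc⟩).2
  refine ⟨hpow, fun hb => ?_⟩
  simpa using ((π.subtypePerm hp ^ k)⁻¹ ⟨_, hb⟩).2

theorem SameCycle.of_forall_sameCycle_apply {π' : Perm α} (h : ∀ c, π'.SameCycle c (π c))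
    {a b : α} (hab : π.SameCycle a b) : π'.SameCycle a b :=
  (hab.iff_of_forall_apply_iff (p := π'.SameCycle a) fun c =>
    ⟨fun hc => hc.trans (h c).symm, fun hc => hc.trans (h c)⟩).1 SameCycle.rfl

theorem mem_periodicPts_of_mapsTo {s : Set α} (hs : s.Finite) (hπ : Set.MapsTo π s s) {x : α}
    (hx : x ∈ s) : x ∈ periodicPts π := by
  have := hs.to_subtype
  obtain ⟨n, hn, hper⟩ := (hπ.restrict_inj.2 π.injective.injOn).mem_periodicPts ⟨x, hx⟩
  have hval := congrArg Subtype.val hper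
  rw [hπ.coe_iterate_restrict] at hval
  exact ⟨n, hn, hval⟩

theorem apply_eq_self_of_sameCycle {σ τ : Perm α} (hστ : Commute σ τ) {a b : α}
    (hab : τ.SameCycle a b) (hb : σ b = b) : σ a = a := by
  obtain ⟨k, hk⟩ := hab
  apply (τ ^ k).injective
  rw [← mul_apply, ← (hστ.zpow_right k).eq, mul_apply, hk, hb]

variable [DecidableEq α] {x y : α}

theorem sameCycle_swap_mul (hxy : ¬π.SameCycle x y) (hx : x ∈ periodicPts π) :
    (swap x y * π).SameCycle x y := by
  -- Along the `π`-cycle of `x`, `swap x y * π` agrees with `π` until the step back to `x`,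
  -- which it sends to `y` instead.
  set r := minimalPeriod π x
  have hr : 0 < r := minimalPeriod_pos_of_mem_periodicPts hx
  have hagree : ∀ k < r, ((swap x y * π) ^ k) x = (π ^ k) x := by
    intro k hk
    induction k with
    | zero => rfl
    | succ k ih =>
      rw [pow_succ', mul_apply, ih (by omega), mul_apply, ← mul_apply π, ← pow_succ']
      refine swap_apply_of_ne_of_ne (fun hret => ?_) fun hy => ?_
      · exact absurd (IsPeriodicPt.minimalPeriod_le k.succ_pos hret) (by omega)
      · exact hxy ⟨(k + 1 : ℕ), by rwa [zpow_natCast]⟩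
  obtain ⟨k, hk⟩ : ∃ k, r = k + 1 := ⟨r - 1, by omega⟩
  refine ⟨r, ?_⟩
  have hret : (π ^ r) x = x := isPeriodicPt_minimalPeriod π x
  rw [zpow_natCast, hk, pow_succ', mul_apply, hagree k (by omega), mul_apply, ← mul_apply π,
    ← pow_succ', ← hk, hret, swap_apply_left]

theorem SameCycle.swap_mul {a b : α} (hab : π.SameCycle a b) (hxy : ¬π.SameCycle x y)
    (hx : x ∈ periodicPts π) : (swap x y * π).SameCycle a b := by
  set π' := swap x y * π
  have hmerge : π'.SameCycle x y := sameCycle_swap_mul hxy hx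
  refine hab.of_forall_sameCycle_apply fun c => ?_
  refine (sameCycle_apply_right.2 SameCycle.rfl : π'.SameCycle c (π' c)).trans ?_
  show π'.SameCycle (swap x y (π c)) (π c)
  rcases eq_or_ne (π c) x with hcx | hcx
  · rw [hcx, swap_apply_left]; exact hmerge.symm
  rcases eq_or_ne (π c) y with hcy | hcy
  · rw [hcy, swap_apply_right]; exact hmerge
  · rw [swap_apply_of_ne_of_ne hcx hcy]

end Equiv.Perm

def adjSwap (i : ℕ) : Perm ℕ := swap i (i + 1)

theorem adjSwap_braid (i : ℕ) :
    adjSwap (i + 1) * adjSwap i * adjSwap (i + 1) = adjSwap i * adjSwap (i + 1) * adjSwap i := by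
  ext x
  simp only [adjSwap, Perm.mul_apply, swap_apply_def]
  split_ifs <;> omega

theorem adjSwap_mul_comm {i j : ℕ} (h : i + 2 ≤ j) :
    adjSwap i * adjSwap j = adjSwap j * adjSwap i := by
  ext x
  simp only [adjSwap, Perm.mul_apply, swap_apply_def]
  split_ifs <;> omega

theorem prod_map_adjSwap_apply_le_iff {w : List ℕ} {j : ℕ} (hj : j ∉ w) (x : ℕ) :
    (w.map adjSwap).prod x ≤ j ↔ x ≤ j := by
  induction w generalizing x with
  | nil => rfl
  | cons i w ih =>
    rw [List.mem_cons, not_or] at hj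
    rw [List.map_cons, List.prod_cons, Perm.mul_apply, ← ih hj.2 x]
    simp only [adjSwap, swap_apply_def]
    split_ifs <;> omega

theorem prod_map_adjSwap_apply_of_forall_lt {w : List ℕ} {x : ℕ} (hw : ∀ i ∈ w, i + 1 < x) :
    (w.map adjSwap).prod x = x := by
  induction w with
  | nil => rfl
  | cons i w ih =>
    have hi := hw i List.mem_cons_self
    rw [List.map_cons, List.prod_cons, Perm.mul_apply,
      ih fun j hj => hw j (List.mem_cons_of_mem i hj)]
    exact swap_apply_of_ne_of_ne (by omega) (by omega)

theorem mem_periodicPts_prod_map_adjSwap (w : List ℕ) (x : ℕ) :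
    x ∈ periodicPts (w.map adjSwap).prod := by
  have hN : x + w.sum + 1 ∉ w := fun h => by
    have := List.le_sum_of_mem h
    omega
  exact Perm.mem_periodicPts_of_mapsTo (Set.finite_Iic _)
    (fun y hy => (prod_map_adjSwap_apply_le_iff hN y).2 hy) (Set.mem_Iic.2 (by omega))

theorem sameCycle_prod_map_adjSwap {w : List ℕ} (hw : w.Nodup) {i : ℕ} (hi : i ∈ w) :
    ((w.map adjSwap).prod).SameCycle i (i + 1) := by
  induction w with
  | nil => simp at hi
  | cons j w ih =>
    rw [List.nodup_cons] at hw
    have hsplit : ¬((w.map adjSwap).prod).SameCycle j (j + 1) := fun h => by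
      simpa using h.iff_of_forall_apply_iff (p := (· ≤ j)) (prod_map_adjSwap_apply_le_iff hw.1)
    rw [List.map_cons, List.prod_cons, adjSwap]
    rcases List.mem_cons.1 hi with rfl | hi
    · exact Perm.sameCycle_swap_mul hsplit (mem_periodicPts_prod_map_adjSwap w _)
    · exact (ih hw.2 hi).swap_mul hsplit (mem_periodicPts_prod_map_adjSwap w _)

def MB.lift {M : Type*} [Monoid M] (f : ℕ+ → M)
    (hbraid : ∀ i, f (i + 1) * f i * f (i + 1) = f i * f (i + 1) * f i)
    (hcomm : ∀ i j, i + 2 ≤ j → f i * f j = f j * f i) : MB →* M :=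
  braidCon.lift (FreeMonoid.lift f) <| Con.conGen_le.2 fun a b h => by
    rcases h with ⟨i, rfl, rfl⟩ | ⟨i, j, hij, rfl, rfl⟩
    · simpa using hbraid i
    · simpa using hcomm i j hij

theorem X_eq_braidGen {i : ℕ} (hi : 1 ≤ i) : X i = braidGen ⟨i, hi⟩ := by
  simp only [X, max_eq_left hi]

def MB.perm : MB →* Perm ℕ :=
  MB.lift (fun i => adjSwap i) (fun i => adjSwap_braid i) fun i j hij =>
    adjSwap_mul_comm (by simpa using (PNat.coe_le_coe _ _).2 hij)

theorem MB.perm_X {i : ℕ} (hi : 1 ≤ i) : MB.perm (X i) = adjSwap i := by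
  rw [X_eq_braidGen hi]
  rfl

theorem MB.perm_prod_map_X {w : List ℕ} (hw : ∀ i ∈ w, 1 ≤ i) :
    MB.perm (w.map X).prod = (w.map adjSwap).prod := by
  rw [map_list_prod, List.map_map]
  exact congrArg List.prod (List.map_congr_left fun i hi => MB.perm_X (hw i hi))

/-- `MB.omitsGen t β` is `1` if the generator `x_t` does not occur in a word for `β` and `0`
otherwise; this is well defined because both braid relations preserve the set of letters. -/
def MB.omitsGen (t : ℕ) : MB →* ℕ :=
  MB.lift (fun i => if (i : ℕ) = t then 0 else 1) (fun i => by split_ifs <;> simp)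
    fun i j _ => by split_ifs <;> simp

theorem MB.omitsGen_X (t : ℕ) {i : ℕ} (hi : 1 ≤ i) :
    MB.omitsGen t (X i) = if i = t then 0 else 1 := by
  rw [X_eq_braidGen hi]
  rfl

theorem mem_of_genDvd_prod_map_X {i : ℕ} (hi : 1 ≤ i) {w : List ℕ} (hw : ∀ j ∈ w, 1 ≤ j)
    (hd : GenDvd i (w.map X).prod) : i ∈ w := by
  by_contra hiw
  obtain ⟨δ, ε, hde⟩ := hd
  have hone : MB.omitsGen i (w.map X).prod = 1 := by
    rw [map_list_prod, List.map_map]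
    refine List.prod_eq_one fun a ha => ?_
    obtain ⟨j, hj, rfl⟩ := List.mem_map.1 ha
    rw [comp_apply, MB.omitsGen_X _ (hw j hj), if_neg fun hji : j = i => hiw (hji ▸ hj)]
  have hzero : MB.omitsGen i (w.map X).prod = 0 := by
    rw [hde, map_mul, map_mul, MB.omitsGen_X _ hi, if_pos rfl, mul_zero, zero_mul]
  omega

theorem not_gen_dvd_of_mem_centralizer_general (n m : ℕ) (hn : 2 ≤ n) (β : MB)
    (hβ : β ∈ SB n) (hβd : GenDvd (n - 1) β) (γ : MB) (hγ : γ ∈ C (n + m) β) :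
    ¬ GenDvd n γ := by
  intro hγd
  obtain ⟨⟨w, hw, hwgen, rfl⟩, hcomm⟩ := hγ
  obtain ⟨u, hu, hugen, rfl⟩ := hβ
  have hnw : n ∈ w := mem_of_genDvd_prod_map_X (by omega) (fun j hj => (hwgen j hj).1) hγd
  have hnu : n - 1 ∈ u := mem_of_genDvd_prod_map_X (by omega) (fun j hj => (hugen j hj).1) hβd
  have hperm : Commute (u.map adjSwap).prod (w.map adjSwap).prod := by
    have h := congrArg MB.perm hcomm
    rwa [map_mul, map_mul, MB.perm_prod_map_X fun j hj => (hugen j hj).1,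
      MB.perm_prod_map_X fun j hj => (hwgen j hj).1] at h
  have hfix : (u.map adjSwap).prod (n + 1) = n + 1 :=
    prod_map_adjSwap_apply_of_forall_lt fun i hi => by have := hugen i hi; omega
  have hn_fixed : (u.map adjSwap).prod n = n :=
    Perm.apply_eq_self_of_sameCycle hperm (sameCycle_prod_map_adjSwap hw hnw) hfix
  have hn_moved := sameCycle_prod_map_adjSwap hu hnu
  rw [Nat.sub_add_cancel (by omega)] at hn_moved
  have := hn_moved.eq_of_right hn_fixed
  omega

/-- Lemma 2.6: if `β ∈ SB_n` with `x_{n-1} ∣ β` and `m ≥ 1`, then `x_n` does not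
divide any `γ ∈ C_{n+m}(β)`. -/
theorem not_gen_dvd_of_mem_centralizer (n m : ℕ) (hn : 2 ≤ n) (hm : 1 ≤ m) (β : MB)
    (hβ : β ∈ SB n) (hβd : GenDvd (n - 1) β) (γ : MB) (hγ : γ ∈ C (n + m) β) :
    ¬ GenDvd n γ :=
  not_gen_dvd_of_mem_centralizer_general n m hn β hβ hβd γ hγ
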